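/- arXiv:2411.15365 — 4 statements merged into one kernel-verified Lean document; each statement's English description precedes it below -/
import Mathlib

section
/- Let q, k ∈ ℕ and let G be a finite graph such that V(G) is (q,k)-unbreakable in G. Let X ⊆ V(G) with |X| ≤ k, and let u, v ∈ V(G) ∖ X be distinct. Then u and v lie in different connected components of G − X (the subgraph of G induced on V(G) ∖ X) if and only if there exists a set A ⊆ V(G) with |A| ≤ q that contains exactly one of u and v and such that every vertex outside A that is adjacent in G to a vertex of A belongs to X. -/
/-- A separation of a graph `G`: a pair of vertex sets covering all vertices with no
edge between `A \ B` and `B \ A`. -/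
def IsSeparation {V : Type*} (G : SimpleGraph V) (A B : Set V) : Prop :=
  A ∪ B = Set.univ ∧ ∀ a ∈ A \ B, ∀ b ∈ B \ A, ¬ G.Adj a b

/-- A vertex set `X` is `(q,k)`-unbreakable in `G` if every separation of order at most `k`
has a side containing at most `q` vertices of `X`. -/
def Unbreakable {V : Type*} (G : SimpleGraph V) (X : Set V) (q k : ℕ) : Prop :=
  ∀ A B : Set V, IsSeparation G A B → (A ∩ B).ncard ≤ k →
    (A ∩ X).ncard ≤ q ∨ (B ∩ X).ncard ≤ q

/-- The graph `G − X`: delete the vertices of `X` (keeping the ambient vertex type,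
with all vertices of `X` isolated, which has the same components outside `X`). -/
def deleteSet {V : Type*} (G : SimpleGraph V) (X : Set V) : SimpleGraph V where
  Adj a b := G.Adj a b ∧ a ∉ X ∧ b ∉ X
  symm := by
    constructor
    intro a b h
    exact ⟨h.1.symm, h.2.2, h.2.1⟩
  loopless := by
    constructor
    intro a h
    exact G.ne_of_adj h.1 rfl

/-!
If `u` and `v` are separated in `G − X`, the component `C` of `u` in `G − X` has all its outside
neighbours in `X`, so `(C ∪ X, Cᶜ ∪ X)` is a separation of order `|X| ≤ k`. Unbreakability makes
one side small: either `C` itself, or the rest `Cᶜ \ X` of `G − X`, which contains `v`.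
Conversely, a set whose outside neighbours all lie in `X` is a union of components of `G − X`,
so it cannot contain exactly one of two vertices joined in `G − X`.
-/

def NeighborsOutsideIn {V : Type*} (G : SimpleGraph V) (A X : Set V) : Prop :=
  ∀ w ∉ A, (∃ a ∈ A, G.Adj w a) → w ∈ X

namespace NeighborsOutsideIn

variable {V : Type*} {G : SimpleGraph V} {A X : Set V}

theorem mem_of_reachable (hA : NeighborsOutsideIn G A X) {a b : V}
    (hab : (deleteSet G X).Reachable a b) (ha : a ∈ A) : b ∈ A := by
  obtain ⟨p⟩ := hab
  induction p with
  | nil => exact ha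
  | cons h _ ih =>
    refine ih (by_contra fun hc => ?_)
    exact h.2.2 (hA _ hc ⟨_, ha, h.1.symm⟩)

theorem mem_iff_of_reachable (hA : NeighborsOutsideIn G A X) {a b : V}
    (hab : (deleteSet G X).Reachable a b) : a ∈ A ↔ b ∈ A :=
  ⟨hA.mem_of_reachable hab, hA.mem_of_reachable hab.symm⟩

theorem compl_diff (hA : NeighborsOutsideIn G A X) : NeighborsOutsideIn G (Aᶜ \ X) X := by
  rintro w hw ⟨a, ⟨haA, haX⟩, hadj⟩
  by_contra hwX
  have hwA : w ∈ A := by simpa [hwX] using hw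
  exact haX (hA a haA ⟨w, hwA, hadj.symm⟩)

theorem isSeparation (hA : NeighborsOutsideIn G A X) : IsSeparation G (A ∪ X) (Aᶜ ∪ X) := by
  refine ⟨Set.eq_univ_of_forall fun x => by by_cases hx : x ∈ A <;> simp [hx], ?_⟩
  rintro a ⟨haA, haB⟩ b ⟨hbB, hbA⟩ hadj
  simp only [Set.mem_union, Set.mem_compl_iff, not_or, not_not] at haA haB hbB hbA
  exact hbA.2 (hA b hbA.1 ⟨a, haB.1, hadj.symm⟩)

end NeighborsOutsideIn

theorem deleteSet_reachable_notMem {V : Type*} {G : SimpleGraph V} {X : Set V} {a b : V}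
    (hab : (deleteSet G X).Reachable a b) (ha : a ∉ X) : b ∉ X := by
  obtain ⟨p⟩ := hab
  induction p with
  | nil => exact ha
  | cons h _ ih => exact ih h.2.2

theorem neighborsOutsideIn_reachable_setOf {V : Type*} {G : SimpleGraph V} {X : Set V} {r : V}
    (hr : r ∉ X) : NeighborsOutsideIn G {x | (deleteSet G X).Reachable r x} X := by
  rintro w hw ⟨a, hra, hadj⟩
  by_contra hwX
  have haX : a ∉ X := deleteSet_reachable_notMem hra hr
  exact hw (hra.trans (SimpleGraph.Adj.reachable ⟨hadj.symm, haX, hwX⟩))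

theorem Unbreakable.ncard_le_or_ncard_compl_diff_le {V : Type*} [Finite V] {G : SimpleGraph V}
    {q k : ℕ} (hunb : Unbreakable G Set.univ q k) {A X : Set V} (hX : X.ncard ≤ k)
    (hA : NeighborsOutsideIn G A X) : A.ncard ≤ q ∨ (Aᶜ \ X).ncard ≤ q := by
  have horder : (A ∪ X) ∩ (Aᶜ ∪ X) = X := by
    rw [← Set.inter_union_distrib_right, Set.inter_compl_self, Set.empty_union]
  refine (hunb _ _ hA.isSeparation (by rwa [horder])).imp (fun h => ?_) (fun h => ?_) <;>
    rw [Set.inter_univ] at h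
  · exact (Set.ncard_le_ncard Set.subset_union_left).trans h
  · exact (Set.ncard_le_ncard fun x hx => Or.inl hx.1).trans h

theorem stmt0_general {V : Type*} [Fintype V] (G : SimpleGraph V) (q k : ℕ)
    (hunb : Unbreakable G Set.univ q k)
    (X : Set V) (hX : X.ncard ≤ k) (u v : V) (hu : u ∉ X) (hv : v ∉ X) :
    ¬ (deleteSet G X).Reachable u v ↔
      ∃ A : Set V, A.ncard ≤ q ∧ ((u ∈ A ∧ v ∉ A) ∨ (u ∉ A ∧ v ∈ A)) ∧
        ∀ w ∉ A, (∃ a ∈ A, G.Adj w a) → w ∈ X := by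
  constructor
  · intro huv
    set C := {x | (deleteSet G X).Reachable u x}
    have hC : NeighborsOutsideIn G C X := neighborsOutsideIn_reachable_setOf hu
    rcases hunb.ncard_le_or_ncard_compl_diff_le hX hC with hsmall | hsmall
    · exact ⟨C, hsmall, Or.inl ⟨SimpleGraph.Reachable.refl u, huv⟩, hC⟩
    · exact ⟨Cᶜ \ X, hsmall, Or.inr ⟨fun h => h.1 .rfl, huv, hv⟩, hC.compl_diff⟩
  · rintro ⟨A, -, hsplit, hA⟩ huv
    have hiff := NeighborsOutsideIn.mem_iff_of_reachable hA huv
    tauto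

theorem stmt0 {V : Type*} [Fintype V] (G : SimpleGraph V) (q k : ℕ)
    (hunb : Unbreakable G Set.univ q k)
    (X : Set V) (hX : X.ncard ≤ k) (u v : V) (hu : u ∉ X) (hv : v ∉ X) (huv : u ≠ v) :
    ¬ (deleteSet G X).Reachable u v ↔
      ∃ A : Set V, A.ncard ≤ q ∧ ((u ∈ A ∧ v ∉ A) ∨ (u ∉ A ∧ v ∈ A)) ∧
        ∀ w ∉ A, (∃ a ∈ A, G.Adj w a) → w ∈ X :=
  stmt0_general G q k hunb X hX u v hu hv
end

section
/- Let σ be a finite relational signature and q ∈ ℕ. If 𝔸₁ ≡_q 𝔸₂ and 𝔹₁ ≡_q 𝔹₂ are σ-structures, then the disjoint unions satisfy 𝔸₁ ⊕ 𝔹₁ ≡_q 𝔸₂ ⊕ 𝔹₂, where the disjoint union of two σ-structures is the σ-structure whose universe is the disjoint sum of the two universes and in which each relation symbol is interpreted as the union of its interpretations in the two structures. -/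
open FirstOrder FirstOrder.Language

/-- Quantifier rank of a first-order (bounded) formula. -/
def qRank {L : Language} {α : Type*} : ∀ {n : ℕ}, L.BoundedFormula α n → ℕ
  | _, .falsum => 0
  | _, .equal _ _ => 0
  | _, .rel _ _ => 0
  | _, .imp f g => max (qRank f) (qRank g)
  | _, .all f => qRank f + 1

/-- Two structures are `q`-equivalent if they satisfy the same sentences of
quantifier rank at most `q`. -/
def EquivQ (L : Language) (q : ℕ) (M N : Type*) [L.Structure M] [L.Structure N] : Prop :=
  ∀ φ : L.Sentence, qRank φ ≤ q → (M ⊨ φ ↔ N ⊨ φ)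

/-- The disjoint union of two structures over a relational language: each relation symbol
is interpreted as the union of its interpretations in the two structures. -/
def sumStructure (L : Language) [L.IsRelational] (M N : Type*) [L.Structure M] [L.Structure N] :
    L.Structure (M ⊕ N) where
  funMap := fun f => isEmptyElim f
  RelMap := fun {n} R v =>
    (∃ w : Fin n → M, v = Sum.inl ∘ w ∧ Structure.RelMap R w) ∨
    (∃ w : Fin n → N, v = Sum.inr ∘ w ∧ Structure.RelMap R w)

/-!
Ehrenfeucht–Fraïssé: over a finite relational signature, `q`-equivalence of tuples amounts to
Duplicator winning the `q`-round back-and-forth game. A winning position forces equal rank-`q`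
types, and these determine the truth of every formula of rank at most `q`; conversely, as there
are only finitely many rank-`q` types, a failure of the forth condition is witnessed by a single
formula of rank `q + 1`. On a disjoint union Duplicator answers each move with her strategy for
the component it is played in: no equality or relation holds across components, so partial
isomorphisms of the two components combine.
-/

namespace EFGame

variable {L : Language} {M N : Type*} [L.Structure M] [L.Structure N]

section QuantifierRank

variable {α β : Type*} {n : ℕ}

@[simp] theorem qRank_not (φ : L.BoundedFormula α n) : qRank φ.not = qRank φ :=
  Nat.max_zero _

@[simp] theorem qRank_inf (φ ψ : L.BoundedFormula α n) :
    qRank (φ ⊓ ψ) = max (qRank φ) (qRank ψ) :=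
  (qRank_not _).trans (congrArg (max (qRank φ)) (qRank_not ψ))

@[simp] theorem qRank_ex (φ : L.BoundedFormula α (n + 1)) : qRank φ.ex = qRank φ + 1 :=
  (qRank_not _).trans (congrArg (· + 1) (qRank_not φ))

theorem qRank_iInf_le [Finite β] {f : β → L.BoundedFormula α n} {q : ℕ}
    (h : ∀ i, qRank (f i) ≤ q) : qRank (BoundedFormula.iInf f) ≤ q := by
  let _ := Fintype.ofFinite β
  simp only [BoundedFormula.iInf]
  induction (Finset.univ : Finset β).toList with
  | nil => exact Nat.zero_le q
  | cons i l ih => simpa using ⟨h i, ih⟩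

end QuantifierRank

section Atoms

def Atom (L : Language) (α : Type*) : Type _ :=
  (α × α) ⊕ Σ R : (Σ n, L.Relations n), Fin R.1 → α

instance {α : Type*} [Finite (Σ n, L.Relations n)] [Finite α] : Finite (Atom L α) := by
  unfold Atom; infer_instance

def Atom.Realize {α : Type*} (a : α → M) : Atom L α → Prop
  | .inl (i, j) => a i = a j
  | .inr ⟨⟨_, R⟩, v⟩ => Structure.RelMap R (a ∘ v)

variable [L.IsRelational]

def termVar {k : ℕ} : L.Term (Empty ⊕ Fin k) → Fin k
  | .var (.inl e) => isEmptyElim e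
  | .var (.inr i) => i
  | .func f _ => isEmptyElim f

theorem realize_termVar {k : ℕ} (t : L.Term (Empty ⊕ Fin k)) (v : Empty ⊕ Fin k → M) :
    t.realize v = v (.inr (termVar t)) := by
  match t with
  | .var (.inl e) => exact isEmptyElim e
  | .var (.inr i) => rfl
  | .func f _ => exact isEmptyElim f

end Atoms

section Types

universe u v

/-- Rank-`q` types of `k`-tuples, encoded by the atomic diagram of the tuple and, for `q > 0`,
the set of rank-`(q - 1)` types of its one-point extensions. -/
def QType (L : FirstOrder.Language.{u, v}) : ℕ → ℕ → Type v
  | 0, k => Atom L (Fin k) → Prop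
  | q + 1, k => (Atom L (Fin k) → Prop) × Set (QType L q (k + 1))

instance QType.finite [Finite (Σ n, L.Relations n)] : ∀ q k, Finite (QType L q k)
  | 0, _ => inferInstanceAs (Finite (_ → Prop))
  | q + 1, k => have := QType.finite q (k + 1); inferInstanceAs (Finite (_ × _))

def QType.atoms : ∀ {q k : ℕ}, QType L q k → Atom L (Fin k) → Prop
  | 0, _, t => t
  | _ + 1, _, t => t.1

variable (L) in
def tp : ∀ (q : ℕ) {k : ℕ}, (Fin k → M) → QType L q k
  | 0, _, a => fun x => x.Realize a
  | q + 1, _, a => (fun x => x.Realize a, Set.range fun m => tp q (Fin.snoc a m))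

@[simp] theorem atoms_tp (q : ℕ) {k : ℕ} (a : Fin k → M) :
    (tp L q a).atoms = fun x : Atom L (Fin k) => x.Realize a := by
  cases q <;> rfl

variable [L.IsRelational]

/-- Only meaningful for formulas of quantifier rank at most `q`: a type of rank `0` says
nothing about quantified formulas. -/
def QType.Satisfies : ∀ {q k : ℕ}, QType L q k → L.BoundedFormula Empty k → Prop
  | _, _, _, .falsum => False
  | _, _, t, .equal t₁ t₂ => t.atoms (.inl (termVar t₁, termVar t₂))
  | _, _, t, .rel R ts => t.atoms (.inr ⟨⟨_, R⟩, termVar ∘ ts⟩)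
  | _, _, t, .imp φ ψ => t.Satisfies φ → t.Satisfies ψ
  | 0, _, _, .all _ => False
  | _ + 1, _, t, .all φ => ∀ t' ∈ t.2, t'.Satisfies φ

theorem realize_iff_satisfies {k : ℕ} (φ : L.BoundedFormula Empty k) {q : ℕ}
    (hφ : qRank φ ≤ q) (a : Fin k → M) : φ.Realize default a ↔ (tp L q a).Satisfies φ := by
  induction φ generalizing q with
  | falsum => cases q <;> rfl
  | equal t₁ t₂ =>
    simp only [QType.Satisfies, atoms_tp, Atom.Realize, BoundedFormula.Realize, realize_termVar]
    rfl
  | rel R ts =>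
    simp only [QType.Satisfies, atoms_tp, Atom.Realize, BoundedFormula.Realize, realize_termVar]
    rfl
  | imp φ ψ ihφ ihψ =>
    rw [qRank, max_le_iff] at hφ
    simp only [QType.Satisfies, BoundedFormula.realize_imp, ihφ hφ.1, ihψ hφ.2]
  | all φ ih =>
    cases q with
    | zero => exact absurd hφ (Nat.succ_ne_zero _ ∘ Nat.le_zero.mp)
    | succ q =>
      simp only [QType.Satisfies, tp, BoundedFormula.realize_all, Set.forall_mem_range,
        ih (Nat.le_of_succ_le_succ hφ)]

end Types

section TupleEquiv

variable (L) in
def TupleEquivQ (q : ℕ) {k : ℕ} (a : Fin k → M) (b : Fin k → N) : Prop :=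
  ∀ φ : L.BoundedFormula Empty k, qRank φ ≤ q → (φ.Realize default a ↔ φ.Realize default b)

variable {q k : ℕ} {a : Fin k → M} {b : Fin k → N}

theorem TupleEquivQ.symm (h : TupleEquivQ L q a b) : TupleEquivQ L q b a :=
  fun φ hφ => (h φ hφ).symm

theorem exists_qRank_le_of_not_tupleEquivQ (h : ¬ TupleEquivQ L q a b) :
    ∃ ψ : L.BoundedFormula Empty k, qRank ψ ≤ q ∧ ψ.Realize default a ∧ ¬ ψ.Realize default b := by
  unfold TupleEquivQ at h
  push Not at h
  obtain ⟨φ, hφ, ⟨ha, hb⟩ | ⟨ha, hb⟩⟩ := h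
  · exact ⟨φ, hφ, ha, hb⟩
  · exact ⟨φ.not, by simpa using hφ, by simpa using ha, by simpa using hb⟩

variable [L.IsRelational]

theorem tupleEquivQ_of_tp_eq (h : tp L q a = tp L q b) : TupleEquivQ L q a b :=
  fun φ hφ => by rw [realize_iff_satisfies φ hφ, realize_iff_satisfies φ hφ, h]

/-- Since there are only finitely many rank-`q` types, finitely many formulas of rank `q`
suffice to separate `Fin.snoc a m` from every `Fin.snoc b n`; their conjunction, existentially
quantified, is a formula of rank `q + 1` true at `a` and false at `b`. -/
theorem TupleEquivQ.exists_snoc [Finite (Σ n, L.Relations n)]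
    (h : TupleEquivQ L (q + 1) a b) (m : M) : ∃ n : N, TupleEquivQ L q (Fin.snoc a m) (Fin.snoc b n) := by
  by_contra! hc
  choose ψ hψq hψa hψb using fun n => exists_qRank_le_of_not_tupleEquivQ (hc n)
  let C := Set.range fun n => {t : QType L q (k + 1) | t.Satisfies (ψ n)}
  let Φ : L.BoundedFormula Empty k := (BoundedFormula.iInf fun c : C => ψ c.2.choose).ex
  have hΦq : qRank Φ ≤ q + 1 := by
    simpa [Φ] using qRank_iInf_le fun c => hψq _
  have hΦa : Φ.Realize default a := by
    simpa [Φ, BoundedFormula.realize_iInf] using ⟨m, fun c _ => hψa _⟩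
  have hΦb := (h Φ hΦq).mp hΦa
  simp only [Φ, BoundedFormula.realize_ex, BoundedFormula.realize_iInf] at hΦb
  obtain ⟨n, hn⟩ := hΦb
  let c : C := ⟨_, n, rfl⟩
  have hc := Set.ext_iff.mp c.2.choose_spec (tp L q (Fin.snoc b n))
  refine hψb n ((realize_iff_satisfies _ (hψq n) _).mpr (hc.mp ?_))
  exact (realize_iff_satisfies _ (hψq _) _).mp (hn c)

end TupleEquiv

section BackForth

variable {α β : Type*}

variable (L) in
def IsPartialIso (a : α → M) (b : α → N) : Prop :=
  (∀ i j, a i = a j ↔ b i = b j) ∧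
    ∀ (n : ℕ) (R : L.Relations n) (v : Fin n → α),
      Structure.RelMap R (a ∘ v) ↔ Structure.RelMap R (b ∘ v)

variable (L) in
/-- Duplicator wins the `q`-round Ehrenfeucht–Fraïssé game from position `(a, b)`. -/
def BackForth : ℕ → ∀ {α : Type*}, (α → M) → (α → N) → Prop
  | 0, _, a, b => IsPartialIso L a b
  | q + 1, _, a, b => IsPartialIso L a b ∧
      (∀ m, ∃ n, BackForth q (Option.elim' m a) (Option.elim' n b)) ∧
      (∀ n, ∃ m, BackForth q (Option.elim' m a) (Option.elim' n b))

variable {q : ℕ} {a : α → M} {b : α → N}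

theorem elim'_comp_map {P : Type*} (p : P) (f : α → P) (e : β → α) :
    Option.elim' p (f ∘ e) = Option.elim' p f ∘ Option.map e :=
  Option.elim'_none_some (Option.elim' p f ∘ Option.map e)

theorem IsPartialIso.comp (h : IsPartialIso L a b) (e : β → α) :
    IsPartialIso L (a ∘ e) (b ∘ e) :=
  ⟨fun i j => h.1 (e i) (e j), fun n R v => h.2 n R (e ∘ v)⟩

theorem IsPartialIso.realize_atom_iff {k : ℕ} {a : Fin k → M} {b : Fin k → N}
    (h : IsPartialIso L a b) : ∀ x : Atom L (Fin k), x.Realize a ↔ x.Realize b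
  | .inl (i, j) => h.1 i j
  | .inr ⟨⟨n, R⟩, v⟩ => h.2 n R v

theorem BackForth.isPartialIso (h : BackForth L q a b) : IsPartialIso L a b := by
  cases q
  exacts [h, h.1]

theorem BackForth.of_succ : ∀ {q : ℕ} {α : Type*} {a : α → M} {b : α → N},
    BackForth L (q + 1) a b → BackForth L q a b
  | 0, _, _, _, h => h.1
  | _ + 1, _, _, _, ⟨h₀, forth, back⟩ =>
    ⟨h₀, fun m => (forth m).imp fun _ => of_succ, fun n => (back n).imp fun _ => of_succ⟩

theorem BackForth.comp : ∀ {q : ℕ} {α β : Type*} {a : α → M} {b : α → N},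
    BackForth L q a b → ∀ e : β → α, BackForth L q (a ∘ e) (b ∘ e)
  | 0, _, _, _, _, h, e => IsPartialIso.comp h e
  | _ + 1, _, _, _, _, ⟨h₀, forth, back⟩, e => by
    refine ⟨h₀.comp e, fun m => ?_, fun n => ?_⟩
    · obtain ⟨n, h⟩ := forth m
      exact ⟨n, by rw [elim'_comp_map, elim'_comp_map]; exact h.comp _⟩
    · obtain ⟨m, h⟩ := back n
      exact ⟨m, by rw [elim'_comp_map, elim'_comp_map]; exact h.comp _⟩

section Tuples

variable {k : ℕ} {a : Fin k → M} {b : Fin k → N}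

theorem snoc_comp_elim' {P : Type*} (p : P) (f : Fin k → P) :
    Fin.snoc f p ∘ Option.elim' (Fin.last k) Fin.castSucc = Option.elim' p f := by
  funext o; cases o <;> simp

theorem backForth_snoc_iff {m : M} {n : N} :
    BackForth L q (Fin.snoc a m) (Fin.snoc b n) ↔
      BackForth L q (Option.elim' m a) (Option.elim' n b) := by
  constructor
  · intro h
    simpa only [snoc_comp_elim'] using h.comp (Option.elim' (Fin.last k) Fin.castSucc)
  · intro h
    have h' := h.comp (Fin.snoc some none)
    rwa [Fin.comp_snoc, Fin.comp_snoc] at h'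

theorem BackForth.tp_eq : ∀ {q k : ℕ} {a : Fin k → M} {b : Fin k → N},
    BackForth L q a b → tp L q a = tp L q b
  | 0, _, _, _, h => funext fun x => propext (h.realize_atom_iff x)
  | _ + 1, _, _, _, ⟨h₀, forth, back⟩ => by
    refine Prod.ext (funext fun x => propext (h₀.realize_atom_iff x)) (subset_antisymm ?_ ?_)
    · rintro _ ⟨m, rfl⟩
      obtain ⟨n, h⟩ := forth m
      exact ⟨n, (backForth_snoc_iff.mpr h).tp_eq.symm⟩
    · rintro _ ⟨n, rfl⟩
      obtain ⟨m, h⟩ := back n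
      exact ⟨m, (backForth_snoc_iff.mpr h).tp_eq⟩

theorem TupleEquivQ.isPartialIso (h : TupleEquivQ L q a b) : IsPartialIso L a b :=
  ⟨fun i j => by
    simpa using h ((Term.var (.inr i) : L.Term (Empty ⊕ Fin k)).bdEqual (Term.var (.inr j)))
      (Nat.zero_le q),
    fun _ R v => h (R.boundedFormula fun l => Term.var (.inr (v l))) (Nat.zero_le q)⟩

theorem TupleEquivQ.backForth [L.IsRelational] [Finite (Σ n, L.Relations n)] :
    ∀ {q k : ℕ} {a : Fin k → M} {b : Fin k → N}, TupleEquivQ L q a b → BackForth L q a b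
  | 0, _, _, _, h => h.isPartialIso
  | _ + 1, _, _, _, h => by
    refine ⟨h.isPartialIso, fun m => ?_, fun n => ?_⟩
    · obtain ⟨n, hn⟩ := h.exists_snoc m
      exact ⟨n, backForth_snoc_iff.mp hn.backForth⟩
    · obtain ⟨m, hm⟩ := h.symm.exists_snoc n
      exact ⟨m, backForth_snoc_iff.mp hm.symm.backForth⟩

end Tuples

end BackForth

section DisjointUnion

variable [L.IsRelational] {α β : Type*} {A B A₁ A₂ B₁ B₂ : Type*} [L.Structure A] [L.Structure B]
  [L.Structure A₁] [L.Structure A₂] [L.Structure B₁] [L.Structure B₂]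

attribute [local instance] _root_.sumStructure

theorem sumMap_comp_eq_inl_comp_iff {ι P Q : Type*} {f : α → P} {g : β → Q}
    {v : ι → α ⊕ β} {w : ι → P} :
    Sum.map f g ∘ v = Sum.inl ∘ w ↔ ∃ u, v = Sum.inl ∘ u ∧ f ∘ u = w := by
  refine ⟨fun h => ?_, by rintro ⟨u, rfl, rfl⟩; rfl⟩
  have hv (l : ι) : ∃ i, v l = .inl i ∧ f i = w l := by
    have hl := congr_fun h l
    cases hvl : v l <;> simp_all
  choose u hu using hv
  exact ⟨u, funext fun l => (hu l).1, funext fun l => (hu l).2⟩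

theorem sumMap_comp_eq_inr_comp_iff {ι P Q : Type*} {f : α → P} {g : β → Q}
    {v : ι → α ⊕ β} {w : ι → Q} :
    Sum.map f g ∘ v = Sum.inr ∘ w ↔ ∃ u, v = Sum.inr ∘ u ∧ g ∘ u = w := by
  refine ⟨fun h => ?_, by rintro ⟨u, rfl, rfl⟩; rfl⟩
  have hv (l : ι) : ∃ i, v l = .inr i ∧ g i = w l := by
    have hl := congr_fun h l
    cases hvl : v l <;> simp_all
  choose u hu using hv
  exact ⟨u, funext fun l => (hu l).1, funext fun l => (hu l).2⟩

theorem relMap_sumMap_comp (a : α → A) (b : β → B) {n : ℕ} (R : L.Relations n)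
    (v : Fin n → α ⊕ β) :
    Structure.RelMap R (Sum.map a b ∘ v) ↔
      (∃ u, v = Sum.inl ∘ u ∧ Structure.RelMap R (a ∘ u)) ∨
        (∃ u, v = Sum.inr ∘ u ∧ Structure.RelMap R (b ∘ u)) := by
  show (∃ w, _ ∧ _) ∨ (∃ w, _ ∧ _) ↔ _
  simp only [sumMap_comp_eq_inl_comp_iff, sumMap_comp_eq_inr_comp_iff, exists_exists_and_eq_and]

theorem IsPartialIso.sumMap {a₁ : α → A₁} {a₂ : α → A₂} {b₁ : β → B₁} {b₂ : β → B₂}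
    (hA : IsPartialIso L a₁ a₂) (hB : IsPartialIso L b₁ b₂) :
    IsPartialIso L (Sum.map a₁ b₁) (Sum.map a₂ b₂) := by
  refine ⟨by rintro (i | i) (j | j) <;> simp [hA.1, hB.1], fun n R v => ?_⟩
  rw [relMap_sumMap_comp, relMap_sumMap_comp]
  exact or_congr (exists_congr fun u => and_congr_right fun _ => hA.2 n R u)
    (exists_congr fun u => and_congr_right fun _ => hB.2 n R u)

variable {q : ℕ} {a₁ : α → A₁} {a₂ : α → A₂} {b₁ : β → B₁} {b₂ : β → B₂}

theorem BackForth.elim'_inl_sumMap {x : A₁} {y : A₂}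
    (h : BackForth L q (Sum.map (Option.elim' x a₁) b₁) (Sum.map (Option.elim' y a₂) b₂)) :
    BackForth L q (Option.elim' (.inl x) (Sum.map a₁ b₁))
      (Option.elim' (.inl y) (Sum.map a₂ b₂)) := by
  convert h.comp (Option.elim' (.inl none) (Sum.map some id)) using 1 <;>
    funext o <;> rcases o with _ | _ | _ <;> rfl

theorem BackForth.elim'_inr_sumMap {x : B₁} {y : B₂}
    (h : BackForth L q (Sum.map a₁ (Option.elim' x b₁)) (Sum.map a₂ (Option.elim' y b₂))) :
    BackForth L q (Option.elim' (.inr x) (Sum.map a₁ b₁))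
      (Option.elim' (.inr y) (Sum.map a₂ b₂)) := by
  convert h.comp (Option.elim' (.inr none) (Sum.map id some)) using 1 <;>
    funext o <;> rcases o with _ | _ | _ <;> rfl

theorem BackForth.sumMap : ∀ {q : ℕ} {α β : Type*} {a₁ : α → A₁} {a₂ : α → A₂} {b₁ : β → B₁}
    {b₂ : β → B₂}, BackForth L q a₁ a₂ → BackForth L q b₁ b₂ →
      BackForth L q (Sum.map a₁ b₁) (Sum.map a₂ b₂)
  | 0, _, _, _, _, _, _, hA, hB => IsPartialIso.sumMap hA hB
  | _ + 1, _, _, _, _, _, _, hA, hB => by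
    refine ⟨hA.isPartialIso.sumMap hB.isPartialIso, ?_, ?_⟩
    · rintro (x | x)
      · obtain ⟨y, h⟩ := hA.2.1 x
        exact ⟨.inl y, (h.sumMap hB.of_succ).elim'_inl_sumMap⟩
      · obtain ⟨y, h⟩ := hB.2.1 x
        exact ⟨.inr y, (hA.of_succ.sumMap h).elim'_inr_sumMap⟩
    · rintro (y | y)
      · obtain ⟨x, h⟩ := hA.2.2 y
        exact ⟨.inl x, (h.sumMap hB.of_succ).elim'_inl_sumMap⟩
      · obtain ⟨x, h⟩ := hB.2.2 y
        exact ⟨.inr x, (hA.of_succ.sumMap h).elim'_inr_sumMap⟩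

end DisjointUnion

section Sentences

variable [L.IsRelational] {q : ℕ}

theorem EquivQ.backForth [Finite (Σ n, L.Relations n)] (h : EquivQ L q M N) :
    BackForth L q (default : Fin 0 → M) (default : Fin 0 → N) :=
  TupleEquivQ.backForth h

theorem equivQ_of_backForth {α : Type*} [IsEmpty α] {a : α → M} {b : α → N}
    (h : BackForth L q a b) : EquivQ L q M N := by
  intro φ hφ
  have hφ' := tupleEquivQ_of_tp_eq (h.comp (isEmptyElim : Fin 0 → α)).tp_eq φ hφ
  rwa [Subsingleton.elim (a ∘ isEmptyElim) default,
    Subsingleton.elim (b ∘ isEmptyElim) default] at hφ'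

end Sentences

end EFGame

open EFGame in
theorem stmt2 {L : Language} [L.IsRelational] [Finite (Σ n, L.Relations n)] (q : ℕ)
    (A₁ A₂ B₁ B₂ : Type*) [L.Structure A₁] [L.Structure A₂] [L.Structure B₁] [L.Structure B₂]
    (hA : EquivQ L q A₁ A₂) (hB : EquivQ L q B₁ B₂) :
    @EquivQ L q (A₁ ⊕ B₁) (A₂ ⊕ B₂) (sumStructure L A₁ B₁) (sumStructure L A₂ B₂) :=
  letI := sumStructure L A₁ B₁
  letI := sumStructure L A₂ B₂
  equivQ_of_backForth (hA.backForth.sumMap hB.backForth)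
end

section
/- There is a function f : ℕ → ℕ such that every finite graph G satisfies cw(G) ≤ f(tw(G)); in particular, every class of graphs of bounded treewidth has bounded cliquewidth. -/
/-!
Root the tree decomposition and let `top u` be the node nearest the root whose bag contains `u`.
The vertices whose top lies in the subtree of `x` are built bottom-up, each colored by its
neighbourhood in `bag x` (at most `2^(k+1)` colors). At `x`, the expressions of the children are
recolored to neighbourhoods in `bag x`, which is possible because a neighbour in `bag x` of a
vertex introduced below a child `y` already lies in `bag y`. Different children contribute no edges
between each other, and the vertices with top `x` enter as single vertices with a private color
each (at most `k+1` more colors); as they lie in `bag x`, all edges at them can be read off from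
the colors. Recoloring them by their neighbourhoods completes the step.
-/

/-- A finite rooted tree, given by its root and parent function: iterating the parent
function from any node eventually reaches the root, and the root is its own parent. -/
structure ParentTree (ι : Type*) where
  root : ι
  parent : ι → ι
  parent_root : parent root = root
  reaches_root : ∀ x : ι, ∃ n : ℕ, parent^[n] x = root

/-- The undirected tree graph, whose edges join each non-root node to its parent. -/
def ParentTree.graph {ι : Type*} (T : ParentTree ι) : SimpleGraph ι where
  Adj a b := a ≠ b ∧ (T.parent a = b ∨ T.parent b = a)
  symm := ⟨by intro a b h; exact ⟨h.1.symm, h.2.symm⟩⟩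
  loopless := ⟨by intro a h; exact h.1 rfl⟩

/-- `(T, bag)` is a tree decomposition of `G`. -/
def IsTreeDecomp {ι V : Type*} (G : SimpleGraph V) (T : ParentTree ι) (bag : ι → Set V) : Prop :=
  (∀ u : V, ((T.graph).induce {x : ι | u ∈ bag x}).Connected) ∧
  (∀ u v : V, G.Adj u v → ∃ x : ι, u ∈ bag x ∧ v ∈ bag x)

/-- `G` has treewidth at most `k`: it has a tree decomposition all of whose bags have
at most `k + 1` vertices. -/
def TreewidthLE {V : Type*} (G : SimpleGraph V) (k : ℕ) : Prop :=
  ∃ (ι : Type) (_ : Fintype ι) (T : ParentTree ι) (bag : ι → Set V),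
    IsTreeDecomp G T bag ∧ ∀ x : ι, (bag x).ncard ≤ k + 1

/-- Cliquewidth expressions over `k` colors: create a single vertex with a color, recolor
along a function `[k] → [k]`, or join a finite family along a set `S` of (unordered,
possibly diagonal) pairs of colors. -/
inductive CWExpr (k : ℕ) : Type
  | single : Fin k → CWExpr k
  | recolor : (Fin k → Fin k) → CWExpr k → CWExpr k
  | join : Set (Sym2 (Fin k)) → (m : ℕ) → (Fin m → CWExpr k) → CWExpr k

namespace CWExpr

/-- The vertex set of the `k`-colored graph that is the value of an expression. -/
def vertices {k : ℕ} : CWExpr k → Type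
  | .single _ => Unit
  | .recolor _ e => e.vertices
  | .join _ m es => Σ i : Fin m, (es i).vertices

/-- The coloring of the value of an expression. -/
def color {k : ℕ} : (e : CWExpr k) → e.vertices → Fin k
  | .single c, _ => c
  | .recolor f e, v => f (e.color v)
  | .join _ _ es, ⟨i, v⟩ => (es i).color v

/-- The adjacency relation of the value of an expression: inside a member of a join the
edges are those of that member; between two distinct members of a join along `S`, a vertex
of color `i` and a vertex of color `j` are joined iff `{i,j} ∈ S`. -/
def adjRel {k : ℕ} : (e : CWExpr k) → e.vertices → e.vertices → Prop
  | .single _, _, _ => False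
  | .recolor _ e, u, v => e.adjRel u v
  | .join S _ es, ⟨i, u⟩, ⟨j, v⟩ =>
      (∃ h : i = j, (es j).adjRel (h ▸ u) v) ∨
      (i ≠ j ∧ s((es i).color u, (es j).color v) ∈ S)

/-- The underlying graph of the value of an expression. -/
def graph {k : ℕ} (e : CWExpr k) : SimpleGraph e.vertices :=
  SimpleGraph.fromRel e.adjRel

end CWExpr

/-- `G` has cliquewidth at most `k`: some `k`-coloring of `G` is the value of a
cliquewidth expression over `k` colors. -/
def CliquewidthLE {V : Type*} (G : SimpleGraph V) (k : ℕ) : Prop :=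
  ∃ e : CWExpr k, Nonempty (G ≃g e.graph)

namespace ParentTree

variable {ι : Type*} (T : ParentTree ι)

/-- `T.Desc a b`: the node `a` lies in the subtree rooted at `b`. -/
def Desc (a b : ι) : Prop := ∃ n, T.parent^[n] a = b

def children (x : ι) : Set ι := {y | T.parent y = x ∧ y ≠ x}

open Classical in
noncomputable def depth (x : ι) : ℕ := Nat.find (T.reaches_root x)

variable {T}

theorem Desc.refl (a : ι) : T.Desc a a := ⟨0, rfl⟩

theorem desc_parent (a : ι) : T.Desc a (T.parent a) := ⟨1, rfl⟩

theorem desc_of_mem_children {x y : ι} (hy : y ∈ T.children x) : T.Desc y x :=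
  hy.1 ▸ desc_parent y

theorem Desc.trans {a b c : ι} (hab : T.Desc a b) (hbc : T.Desc b c) : T.Desc a c := by
  obtain ⟨n, rfl⟩ := hab
  obtain ⟨m, rfl⟩ := hbc
  exact ⟨m + n, Function.iterate_add_apply _ _ _ _⟩

theorem desc_root (a : ι) : T.Desc a T.root := T.reaches_root a

theorem iterate_parent_depth (x : ι) : T.parent^[T.depth x] x = T.root := by
  classical exact Nat.find_spec (T.reaches_root x)

theorem depth_le {x : ι} {n : ℕ} (h : T.parent^[n] x = T.root) : T.depth x ≤ n := by
  classical exact Nat.find_min' _ h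

theorem depth_root : T.depth T.root = 0 := Nat.le_zero.mp (depth_le rfl)

theorem eq_root_of_depth_eq_zero {x : ι} (h : T.depth x = 0) : x = T.root := by
  simpa [h] using iterate_parent_depth (T := T) x

theorem eq_root_or_depth_add_le {a b : ι} {n : ℕ} :
    T.parent^[n] a = b → b = T.root ∨ T.depth b + n ≤ T.depth a := by
  rintro rfl
  rcases le_or_gt n (T.depth a) with h | h
  · right
    have : T.parent^[T.depth a - n] (T.parent^[n] a) = T.root := by
      rw [← Function.iterate_add_apply, Nat.sub_add_cancel h, iterate_parent_depth]
    have := depth_le this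
    omega
  · left
    rw [← Nat.sub_add_cancel h.le, Function.iterate_add_apply, iterate_parent_depth,
      Function.iterate_fixed T.parent_root]

theorem Desc.depth_le {a b : ι} (h : T.Desc a b) : T.depth b ≤ T.depth a := by
  obtain ⟨n, hn⟩ := h
  rcases eq_root_or_depth_add_le hn with rfl | h
  · simp [depth_root]
  · omega

theorem Desc.eq_of_depth_le {a b : ι} (h : T.Desc a b) (hd : T.depth a ≤ T.depth b) : a = b := by
  obtain ⟨n, hn⟩ := h
  rcases eq_root_or_depth_add_le hn with rfl | h
  · rw [depth_root] at hd
    exact eq_root_of_depth_eq_zero (Nat.le_zero.mp hd)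
  · obtain rfl : n = 0 := by omega
    exact hn

theorem Desc.antisymm {a b : ι} (hab : T.Desc a b) (hba : T.Desc b a) : a = b :=
  hab.eq_of_depth_le hba.depth_le

theorem Desc.total {a b c : ι} (hab : T.Desc a b) (hac : T.Desc a c) :
    T.Desc b c ∨ T.Desc c b := by
  obtain ⟨n, rfl⟩ := hab
  obtain ⟨m, rfl⟩ := hac
  rcases le_total n m with h | h
  · exact .inl ⟨m - n, by rw [← Function.iterate_add_apply, Nat.sub_add_cancel h]⟩
  · exact .inr ⟨n - m, by rw [← Function.iterate_add_apply, Nat.sub_add_cancel h]⟩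

theorem Desc.eq_or_exists_desc_child {a x : ι} (h : T.Desc a x) :
    a = x ∨ ∃ y ∈ T.children x, T.Desc a y := by
  obtain ⟨n, rfl⟩ := h
  induction n with
  | zero => exact .inl rfl
  | succ n ih =>
    by_cases hfix : T.parent (T.parent^[n] a) = T.parent^[n] a
    · rwa [Function.iterate_succ_apply', hfix]
    · refine .inr ⟨T.parent^[n] a, ⟨(Function.iterate_succ_apply' _ _ _).symm, fun h => ?_⟩, n, rfl⟩
      rw [Function.iterate_succ_apply'] at h
      exact hfix h.symm

theorem eq_of_mem_children_of_desc {x y y' : ι} (hy : y ∈ T.children x)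
    (hy' : y' ∈ T.children x) (h : T.Desc y y') : y = y' := by
  obtain ⟨_ | m, hm⟩ := h
  · exact hm
  · have hxy' : T.Desc x y' := ⟨m, by rw [← hm, Function.iterate_succ_apply, hy.1]⟩
    exact absurd (desc_of_mem_children hy' |>.antisymm hxy') hy'.2

theorem eq_of_mem_children_of_desc_of_desc {a x y y' : ι} (hy : y ∈ T.children x)
    (hy' : y' ∈ T.children x) (ha : T.Desc a y) (ha' : T.Desc a y') : y = y' := by
  rcases ha.total ha' with h | h
  · exact eq_of_mem_children_of_desc hy hy' h
  · exact (eq_of_mem_children_of_desc hy' hy h).symm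

theorem ncard_desc_lt [Finite ι] {x y : ι} (hy : y ∈ T.children x) :
    {z | T.Desc z y}.ncard < {z | T.Desc z x}.ncard := by
  refine Set.ncard_lt_ncard ⟨fun z hz => hz.trans (desc_of_mem_children hy), fun h => ?_⟩
  exact hy.2 ((desc_of_mem_children hy).antisymm (h (Desc.refl x)))

theorem mem_support_of_desc {a b c : ι} (w : T.graph.Walk a c) (hab : T.Desc a b)
    (hcb : ¬ T.Desc c b) : b ∈ w.support := by
  induction w with
  | nil => exact absurd hab hcb
  | @cons a a' c h w ih =>
    rw [SimpleGraph.Walk.support_cons, List.mem_cons]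
    by_cases hb : a = b
    · exact .inl hb.symm
    · refine .inr (ih ?_ hcb)
      rcases h.2 with rfl | rfl
      · obtain ⟨_ | m, hm⟩ := hab
        · exact absurd hm hb
        · exact ⟨m, hm⟩
      · exact (desc_parent a').trans hab

theorem desc_of_walk_of_depth_le {a t : ι} (w : T.graph.Walk a t)
    (hmin : ∀ z ∈ w.support, T.depth t ≤ T.depth z) : T.Desc a t := by
  induction w with
  | nil => exact .refl _
  | @cons a a' t h w ih =>
    have ha't := ih fun z hz => hmin z (List.mem_cons_of_mem _ hz)
    rcases h.2 with rfl | rfl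
    · exact (desc_parent a).trans ha't
    · rcases (desc_parent a').total ha't with h | h
      · exact h
      · exact (h.eq_of_depth_le (hmin _ List.mem_cons_self)) ▸ .refl _

end ParentTree

namespace IsTreeDecomp

open ParentTree

variable {ι V : Type*} {G : SimpleGraph V} {T : ParentTree ι} {bag : ι → Set V}
  (hd : IsTreeDecomp G T bag)
include hd

/-- The bags containing `u` form a subtree, and its node of least depth is its root. -/
theorem exists_top (u : V) : ∃ t, u ∈ bag t ∧ ∀ z, u ∈ bag z → T.Desc z t := by
  obtain ⟨⟨z₀, hz₀⟩⟩ := (hd.1 u).nonempty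
  obtain ⟨t, ht, hmin⟩ : ∃ t ∈ {x | u ∈ bag x}, ∀ z ∈ {x | u ∈ bag x}, T.depth t ≤ T.depth z :=
    ⟨_, Function.argminOn_mem T.depth _ ⟨z₀, hz₀⟩, fun z hz => Function.argminOn_le _ _ hz⟩
  refine ⟨t, ht, fun z hz => ?_⟩
  obtain ⟨w⟩ := (hd.1 u).preconnected ⟨z, hz⟩ ⟨t, ht⟩
  have hw : ∀ x ∈ (w.map (SimpleGraph.Embedding.induce _).toHom).support,
      T.depth t ≤ T.depth x := by
    intro x hx
    rw [SimpleGraph.Walk.support_map, List.mem_map] at hx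
    obtain ⟨x, -, rfl⟩ := hx
    exact hmin x x.2
  exact desc_of_walk_of_depth_le _ hw

noncomputable def top (u : V) : ι := (hd.exists_top u).choose

theorem mem_bag_top (u : V) : u ∈ bag (hd.top u) := (hd.exists_top u).choose_spec.1

theorem desc_top {u : V} {z : ι} (hz : u ∈ bag z) : T.Desc z (hd.top u) :=
  (hd.exists_top u).choose_spec.2 z hz

theorem mem_bag_of_desc {u : V} {a b c : ι} (ha : u ∈ bag a) (hab : T.Desc a b)
    (hbc : T.Desc b c) (hc : u ∈ bag c) : u ∈ bag b := by
  by_cases hcb : T.Desc c b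
  · exact hbc.antisymm hcb ▸ hc
  · obtain ⟨w⟩ := (hd.1 u).preconnected ⟨a, ha⟩ ⟨c, hc⟩
    have hb := mem_support_of_desc (w.map (SimpleGraph.Embedding.induce _).toHom) hab hcb
    rw [SimpleGraph.Walk.support_map, List.mem_map] at hb
    obtain ⟨z, -, rfl⟩ := hb
    exact z.2

def subtreeVerts (x : ι) : Set V := {v | T.Desc (hd.top v) x}

theorem subtreeVerts_root : hd.subtreeVerts T.root = Set.univ :=
  Set.eq_univ_of_forall fun v => desc_root (hd.top v)

theorem top_ne_of_mem_subtreeVerts {x y : ι} {u : V} (hy : y ∈ T.children x)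
    (hu : u ∈ hd.subtreeVerts y) : hd.top u ≠ x := by
  rintro rfl
  exact hy.2 ((desc_of_mem_children hy).antisymm hu)

theorem mem_bag_of_adj {x y : ι} {u w : V} (hy : y ∈ T.children x)
    (hu : u ∈ hd.subtreeVerts y) (hw : w ∈ bag x) (huw : G.Adj u w) : w ∈ bag y := by
  obtain ⟨c, hcu, hcw⟩ := hd.2 u w huw
  exact hd.mem_bag_of_desc hcw ((hd.desc_top hcu).trans hu) (desc_of_mem_children hy) hw

theorem not_adj_of_mem_subtreeVerts {x y y' : ι} {u v : V} (hy : y ∈ T.children x)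
    (hy' : y' ∈ T.children x) (hne : y ≠ y') (hu : u ∈ hd.subtreeVerts y)
    (hv : v ∈ hd.subtreeVerts y') : ¬ G.Adj u v := fun huv => by
  obtain ⟨c, hcu, hcv⟩ := hd.2 u v huv
  exact hne (eq_of_mem_children_of_desc_of_desc hy hy' ((hd.desc_top hcu).trans hu)
    ((hd.desc_top hcv).trans hv))

end IsTreeDecomp

namespace CWExpr

variable {n : ℕ}

theorem graph_adj_iff (e : CWExpr n) (a b : e.vertices) :
    e.graph.Adj a b ↔ a ≠ b ∧ (e.adjRel a b ∨ e.adjRel b a) :=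
  SimpleGraph.fromRel_adj _ _ _

theorem not_adj_single (c : Fin n) (a b : (single c).vertices) : ¬ (single c).graph.Adj a b := by
  rw [graph_adj_iff]
  rintro ⟨-, h | h⟩ <;> exact h

theorem adj_join_mk_mk {S : Set (Sym2 (Fin n))} {m : ℕ} {es : Fin m → CWExpr n} (i : Fin m)
    (a b : (es i).vertices) :
    (join S m es).graph.Adj ⟨i, a⟩ ⟨i, b⟩ ↔ (es i).graph.Adj a b := by
  have hrel : ∀ u v : (es i).vertices,
      (join S m es).adjRel ⟨i, u⟩ ⟨i, v⟩ ↔ (es i).adjRel u v := fun u v =>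
    ⟨fun h => h.elim (fun ⟨_, h⟩ => h) (fun h => absurd rfl h.1), fun h => .inl ⟨rfl, h⟩⟩
  erw [graph_adj_iff, graph_adj_iff, hrel, hrel]
  exact and_congr_left' sigma_mk_injective.ne_iff

theorem adj_join_mk_mk_of_ne {S : Set (Sym2 (Fin n))} {m : ℕ} {es : Fin m → CWExpr n}
    {i j : Fin m} (hij : i ≠ j) (a : (es i).vertices) (b : (es j).vertices) :
    (join S m es).graph.Adj ⟨i, a⟩ ⟨j, b⟩ ↔ s((es i).color a, (es j).color b) ∈ S := by
  erw [graph_adj_iff]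
  constructor
  · rintro ⟨-, (⟨h, -⟩ | ⟨-, hS⟩) | (⟨h, -⟩ | ⟨-, hS⟩)⟩
    · exact absurd h hij
    · exact hS
    · exact absurd h.symm hij
    · rwa [Sym2.eq_swap]
  · exact fun hS => ⟨fun h => hij (congrArg Sigma.fst h), .inl (.inr ⟨hij, hS⟩)⟩

end CWExpr

namespace SimpleGraph

variable {V : Type*} (G : SimpleGraph V)

def CWRealizable (n : ℕ) (S : Set V) (col : V → Fin n) : Prop :=
  ∃ (e : CWExpr n) (φ : e.vertices → V), Function.Injective φ ∧ Set.range φ = S ∧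
    (∀ a, e.color a = col (φ a)) ∧ ∀ a b, e.graph.Adj a b ↔ G.Adj (φ a) (φ b)

variable {G} {n : ℕ}

theorem CWRealizable.singleton (v : V) (col : V → Fin n) : G.CWRealizable n {v} col :=
  ⟨.single (col v), fun _ => v, fun _ _ _ => rfl, @Set.range_const _ _ ⟨()⟩ v, fun _ => rfl,
    fun a b => iff_of_false (CWExpr.not_adj_single _ a b) (G.loopless.irrefl v)⟩

theorem CWRealizable.recolor {S : Set V} {col col' : V → Fin n} (h : G.CWRealizable n S col)
    (hcol : ∀ u ∈ S, ∀ v ∈ S, col u = col v → col' u = col' v) : G.CWRealizable n S col' := by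
  obtain ⟨e, φ, hinj, hrange, hcolor, hadj⟩ := h
  have hfac : Function.FactorsThrough (fun v : S => col' v) (fun v : S => col v) :=
    fun u v huv => hcol u u.2 v v.2 huv
  refine ⟨.recolor (Function.extend (fun v : S => col v) (fun v => col' v) id) e, φ, hinj,
    hrange, fun a => ?_, hadj⟩
  have hφa : φ a ∈ S := hrange ▸ Set.mem_range_self a
  exact (congrArg _ (hcolor a)).trans (hfac.extend_apply id ⟨φ a, hφa⟩)

theorem CWRealizable.iUnion {κ : Type*} [Finite κ] {S : κ → Set V} {col : V → Fin n}
    (hdisj : Pairwise fun i j => Disjoint (S i) (S j)) (h : ∀ i, G.CWRealizable n (S i) col)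
    (P : Set (Sym2 (Fin n)))
    (hP : ∀ i j, i ≠ j → ∀ u ∈ S i, ∀ v ∈ S j, G.Adj u v ↔ s(col u, col v) ∈ P) :
    G.CWRealizable n (⋃ i, S i) col := by
  choose e φ hinj hrange hcolor hadj using h
  have hmem : ∀ i a, φ i a ∈ S i := fun i a => hrange i ▸ Set.mem_range_self a
  let σ := Finite.equivFin κ
  refine ⟨.join P _ (fun j => e (σ.symm j)), fun a => φ _ a.2, ?_, ?_, fun a => hcolor _ a.2, ?_⟩
  · rintro ⟨j, a⟩ ⟨j', b⟩ (hab : φ _ a = φ _ b)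
    obtain rfl : j = j' := by
      by_contra hne
      exact Set.disjoint_left.mp (hdisj (σ.symm.injective.ne hne)) (hmem _ a) (hab ▸ hmem _ b)
    exact congrArg (Sigma.mk j) (hinj _ hab)
  · ext v
    refine ⟨?_, fun hv => ?_⟩
    · rintro ⟨⟨j, a⟩, rfl⟩
      exact Set.mem_iUnion.mpr ⟨_, hmem _ a⟩
    obtain ⟨i, hi⟩ := Set.mem_iUnion.mp hv
    obtain ⟨j, rfl⟩ := σ.symm.surjective i
    obtain ⟨a, rfl⟩ := (hrange _).symm ▸ hi
    exact ⟨⟨j, a⟩, rfl⟩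
  · rintro ⟨j, a⟩ ⟨j', b⟩
    by_cases hjj : j = j'
    · subst hjj
      exact (CWExpr.adj_join_mk_mk (S := P) (es := fun j => e (σ.symm j)) j a b).trans
        (hadj _ a b)
    · rw [CWExpr.adj_join_mk_mk_of_ne hjj, hcolor, hcolor]
      exact (hP _ _ (σ.symm.injective.ne hjj) _ (hmem _ a) _ (hmem _ b)).symm

end SimpleGraph

theorem SimpleGraph.CWRealizable.cliquewidthLE {V : Type*} {G : SimpleGraph V} {n : ℕ}
    {col : V → Fin n} (h : G.CWRealizable n Set.univ col) : CliquewidthLE G n := by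
  obtain ⟨e, φ, hinj, hrange, -, hadj⟩ := h
  let φ' := Equiv.ofBijective φ ⟨hinj, Set.range_eq_univ.mp hrange⟩
  exact ⟨e, ⟨φ'.symm, fun {u v} => (hadj _ _).trans <| by
    conv_rhs => rw [← φ'.apply_symm_apply u, ← φ'.apply_symm_apply v]
    rfl⟩⟩

def cwBound (k : ℕ) : ℕ := 2 ^ (k + 1) + (k + 1)

/-- A vertex at node `x` is colored either by its neighbourhood in `bag x` or, while it is
being introduced, by its own name in `bag x`; this needs at most `cwBound k` colors. -/
noncomputable def bagColoring {ι V : Type*} [Finite V] {bag : ι → Set V} {k : ℕ}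
    (hb : ∀ x, (bag x).ncard ≤ k + 1) (x : ι) : Set (bag x) ⊕ bag x ↪ Fin (cwBound k) := by
  classical
  haveI := Fintype.ofFinite (bag x)
  refine Classical.choice (Function.Embedding.nonempty_of_card_le ?_)
  have h : Fintype.card (bag x) ≤ k + 1 := by
    rw [← Nat.card_eq_fintype_card, Nat.card_coe_set_eq]
    exact hb x
  rw [Fintype.card_sum, Fintype.card_set, Fintype.card_fin]
  exact add_le_add (Nat.pow_le_pow_right two_pos h) h

section Coloring

variable {ι V : Type*} [Finite V] (G : SimpleGraph V) {bag : ι → Set V} {k : ℕ}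
  (hb : ∀ x, (bag x).ncard ≤ k + 1)

noncomputable def nbrColor (x : ι) (v : V) : Fin (cwBound k) :=
  bagColoring hb x (.inl (Subtype.val ⁻¹' G.neighborSet v))

variable {G hb}

theorem nbrColor_eq_iff {x : ι} {u v : V} :
    nbrColor G hb x u = nbrColor G hb x v ↔ ∀ w ∈ bag x, (G.Adj u w ↔ G.Adj v w) := by
  simp [nbrColor, Set.ext_iff]

end Coloring

namespace IsTreeDecomp

open ParentTree SimpleGraph

variable {ι V : Type*} {G : SimpleGraph V} {T : ParentTree ι} {bag : ι → Set V}
  (hd : IsTreeDecomp G T bag)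

def piece (x : ι) : T.children x ⊕ {u // hd.top u = x} → Set V :=
  Sum.elim (fun y => hd.subtreeVerts y) (fun u => {u.1})

variable {hd}

theorem iUnion_piece (x : ι) : ⋃ i, hd.piece x i = hd.subtreeVerts x := by
  ext v
  simp only [Set.mem_iUnion, Sum.exists, piece, Sum.elim_inl, Sum.elim_inr,
    Set.mem_singleton_iff, Subtype.exists]
  constructor
  · rintro (⟨y, hy, hv⟩ | ⟨u, rfl, rfl⟩)
    · exact Desc.trans hv (desc_of_mem_children hy)
    · exact Desc.refl _
  · intro hv
    rcases Desc.eq_or_exists_desc_child hv with h | ⟨y, hy, hvy⟩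
    exacts [.inr ⟨v, h, rfl⟩, .inl ⟨y, hy, hvy⟩]

theorem pairwise_disjoint_piece (x : ι) :
    Pairwise fun i j => Disjoint (hd.piece x i) (hd.piece x j) := by
  rintro (⟨y, hy⟩ | ⟨u, hu⟩) (⟨y', hy'⟩ | ⟨u', hu'⟩) hne <;>
    simp only [piece, Sum.elim_inl, Sum.elim_inr, Set.disjoint_singleton_left,
      Set.disjoint_singleton_right]
  · exact Set.disjoint_left.mpr fun v hv hv' =>
      hne (congrArg Sum.inl (Subtype.ext (eq_of_mem_children_of_desc_of_desc hy hy' hv hv')))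
  · exact fun h => hd.top_ne_of_mem_subtreeVerts hy h hu'
  · exact fun h => hd.top_ne_of_mem_subtreeVerts hy' h hu
  · exact fun h => hne (by subst h; rfl)

theorem top_eq_or_top_eq_of_adj {x : ι} {i j} (hij : i ≠ j) {u v : V} (hu : u ∈ hd.piece x i)
    (hv : v ∈ hd.piece x j) (huv : G.Adj u v) : hd.top u = x ∨ hd.top v = x := by
  rcases i with ⟨y, hy⟩ | ⟨u', hu'⟩
  · rcases j with ⟨y', hy'⟩ | ⟨v', hv'⟩
    · exact absurd huv (hd.not_adj_of_mem_subtreeVerts hy hy' (fun h => hij (by subst h; rfl))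
        hu hv)
    · exact .inr (Set.mem_singleton_iff.mp hv ▸ hv')
  · exact .inl (Set.mem_singleton_iff.mp hu ▸ hu')

section Coloring

variable (hd) [Finite V] {k : ℕ} (hb : ∀ x, (bag x).ncard ≤ k + 1)

open Classical in
noncomputable def joinColor (x : ι) (v : V) : Fin (cwBound k) :=
  if h : hd.top v = x then bagColoring hb x (.inr ⟨v, h ▸ hd.mem_bag_top v⟩)
  else nbrColor G hb x v

def joinEdgeColors (x : ι) : Set (Sym2 (Fin (cwBound k))) :=
  {p | ∃ a b, hd.top a = x ∧ G.Adj a b ∧ p = s(hd.joinColor hb x a, hd.joinColor hb x b)}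

variable {hd hb}

theorem joinColor_of_top_ne {x : ι} {v : V} (h : hd.top v ≠ x) :
    hd.joinColor hb x v = nbrColor G hb x v :=
  dif_neg h

theorem eq_or_of_joinColor_eq {x : ι} {u v : V} (h : hd.joinColor hb x u = hd.joinColor hb x v) :
    u = v ∨ hd.top u ≠ x ∧ hd.top v ≠ x ∧ nbrColor G hb x u = nbrColor G hb x v := by
  unfold joinColor nbrColor at h
  split_ifs at h with hu hv hv
  · exact .inl (congrArg Subtype.val (Sum.inr_injective ((bagColoring hb x).injective h)))
  · exact absurd ((bagColoring hb x).injective h) Sum.inr_ne_inl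
  · exact absurd ((bagColoring hb x).injective h) Sum.inl_ne_inr
  · exact .inr ⟨hu, hv, h⟩

theorem nbrColor_eq_of_joinColor_eq {x : ι} {u v : V}
    (h : hd.joinColor hb x u = hd.joinColor hb x v) : nbrColor G hb x u = nbrColor G hb x v := by
  rcases eq_or_of_joinColor_eq h with rfl | ⟨-, -, h⟩
  exacts [rfl, h]

theorem joinColor_eq_of_nbrColor_eq {x y : ι} (hy : y ∈ T.children x) {u v : V}
    (hu : u ∈ hd.subtreeVerts y) (hv : v ∈ hd.subtreeVerts y)
    (h : nbrColor G hb y u = nbrColor G hb y v) : hd.joinColor hb x u = hd.joinColor hb x v := by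
  rw [joinColor_of_top_ne (hd.top_ne_of_mem_subtreeVerts hy hu),
    joinColor_of_top_ne (hd.top_ne_of_mem_subtreeVerts hy hv), nbrColor_eq_iff]
  have hnbr := nbrColor_eq_iff.mp h
  exact fun w hw => ⟨fun huw => (hnbr w (hd.mem_bag_of_adj hy hu hw huw)).mp huw,
    fun hvw => (hnbr w (hd.mem_bag_of_adj hy hv hw hvw)).mpr hvw⟩

/-- A vertex introduced at `x` is the only vertex of its join color, and the join color of any
other vertex records its neighbourhood in `bag x`. -/
theorem adj_of_joinColor_eq {x : ι} {u v a b : V} (ha : hd.top a = x) (hab : G.Adj a b)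
    (hua : hd.joinColor hb x u = hd.joinColor hb x a)
    (hvb : hd.joinColor hb x v = hd.joinColor hb x b) : G.Adj u v := by
  obtain rfl : u = a := (eq_or_of_joinColor_eq hua).resolve_right fun h => h.2.1 ha
  rcases eq_or_of_joinColor_eq hvb with rfl | ⟨-, -, h⟩
  · exact hab
  · exact ((nbrColor_eq_iff.mp h u (ha ▸ hd.mem_bag_top u)).mpr hab.symm).symm

theorem adj_iff_of_mem_piece {x : ι} {i j} (hij : i ≠ j) {u v : V} (hu : u ∈ hd.piece x i)
    (hv : v ∈ hd.piece x j) :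
    G.Adj u v ↔ s(hd.joinColor hb x u, hd.joinColor hb x v) ∈ hd.joinEdgeColors hb x := by
  refine ⟨fun huv => ?_, fun ⟨a, b, ha, hab, he⟩ => ?_⟩
  · rcases top_eq_or_top_eq_of_adj hij hu hv huv with h | h
    · exact ⟨u, v, h, huv, rfl⟩
    · exact ⟨v, u, h, huv.symm, Sym2.eq_swap⟩
  · rcases Sym2.eq_iff.mp he with ⟨hua, hvb⟩ | ⟨hub, hva⟩
    · exact adj_of_joinColor_eq ha hab hua hvb
    · exact (adj_of_joinColor_eq ha hab hva hub).symm

variable (hb) in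
theorem cwRealizable_subtreeVerts [Finite ι] (x : ι) :
    G.CWRealizable (cwBound k) (hd.subtreeVerts x) (nbrColor G hb x) := by
  induction x using (measure fun x => {z | T.Desc z x}.ncard).wf.induction with
  | h x ih =>
    have hpiece : ∀ i, G.CWRealizable (cwBound k) (hd.piece x i) (hd.joinColor hb x) := by
      rintro (⟨y, hy⟩ | ⟨u, -⟩)
      · exact (ih y (ncard_desc_lt hy)).recolor fun u hu v hv =>
          joinColor_eq_of_nbrColor_eq hy hu hv
      · exact .singleton u _
    have hjoin := CWRealizable.iUnion (hd.pairwise_disjoint_piece x) hpiece _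
      fun _ _ hij _ hu _ hv => adj_iff_of_mem_piece hij hu hv
    rw [iUnion_piece] at hjoin
    exact hjoin.recolor fun _ _ _ _ => nbrColor_eq_of_joinColor_eq

end Coloring

end IsTreeDecomp

theorem stmt13 :
    ∃ f : ℕ → ℕ, ∀ (V : Type) (_ : Fintype V) (G : SimpleGraph V) (k : ℕ),
      TreewidthLE G k → CliquewidthLE G (f k) := by
  refine ⟨cwBound, fun V _ G k ⟨ι, _, T, bag, hd, hb⟩ => ?_⟩
  have h := hd.cwRealizable_subtreeVerts hb T.root
  rw [hd.subtreeVerts_root] at h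
  exact h.cliquewidthLE
end

section
/- There exist a finite relational signature σ and a first-order sentence φ over σ ∪ {<} that is order-invariant on finite σ-structures, such that the class of finite σ-structures defined by φ is not defined by any first-order sentence over σ; that is, order-invariant first-order logic is strictly more expressive than first-order logic on finite structures. -/
open FirstOrder FirstOrder.Language

/-- The language with a single binary relation symbol `<` (and nothing else). -/
def ordL : FirstOrder.Language :=
  ⟨fun _ => Empty, fun n => match n with
    | 2 => Unit
    | _ => Empty⟩

/-- The expansion `σ ∪ {<}` of a signature `σ` by a new binary relation symbol. -/
def addOrder (σ : FirstOrder.Language) : FirstOrder.Language := σ.sum ordL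

/-- The `(σ ∪ {<})`-structure obtained from a `σ`-structure by interpreting `<` as the
binary relation `r`. -/
def addOrderStruct (σ : FirstOrder.Language) (A : Type*) (SA : σ.Structure A)
    (r : A → A → Prop) : (addOrder σ).Structure A where
  funMap := fun {n} f =>
    match f with
    | Sum.inl g => @Structure.funMap σ A SA n g
    | Sum.inr g => g.elim
  RelMap := fun {n} R v =>
    match n, R, v with
    | n, Sum.inl S, v => @Structure.RelMap σ A SA n S v
    | 2, Sum.inr _, v => r (v 0) (v 1)
    | 0, Sum.inr g, _ => g.elim
    | 1, Sum.inr g, _ => g.elim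
    | (_ + 3), Sum.inr g, _ => g.elim

/-!
On finite structures in which some set is empty and any atom can be adjoined to any set, every
set of atoms is an element. In such a structure, a set containing exactly every other atom
along `<`, from the least atom on and avoiding the greatest, exists iff the number of atoms is
even, and this does not depend on the order. So `evenAtoms` is order-invariant.

No `memLang`-sentence defines the same class. In the model `SetModel α` of the atoms `α` and all
their finite sets, the type of a tuple up to `k` quantifiers is determined by which of its
entries are atoms and by the sizes of the cells of the Venn diagram of its entries, capped at
`2 ^ k` (`TupleEquiv`): a new set is matched in the other model by splitting every cell in
matching capped proportions, which halves the cap. Hence `SetModel (Fin (2 * 2 ^ k))` and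
`SetModel (Fin (2 * 2 ^ k + 1))` agree on every sentence that needs at most `k` quantifiers,
although only the first has an even number of atoms.
-/

def IsAlternating {α : Type*} [Preorder α] (Z : α → Prop) : Prop :=
  (∀ a, IsMin a → Z a) ∧ (∀ a b, a ⋖ b → (Z a ↔ ¬ Z b)) ∧ ∀ a, IsMax a → ¬ Z a

theorem OrderIso.isAlternating_comp_iff {α β : Type*} [Preorder α] [Preorder β] (e : α ≃o β)
    {Z : β → Prop} : IsAlternating (Z ∘ e) ↔ IsAlternating Z := by
  simp only [IsAlternating, Function.comp_apply, ← e.isMin_apply, ← e.isMax_apply,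
    ← apply_covBy_apply_iff e, e.surjective.forall]

theorem IsAlternating.fin_iff_even {n : ℕ} {Z : Fin n → Prop} (hZ : IsAlternating Z)
    (i : Fin n) : Z i ↔ Even (i : ℕ) := by
  obtain ⟨i, hi⟩ := i
  induction i with
  | zero => simpa using hZ.1 _ fun b _ => Nat.zero_le b
  | succ i ih =>
    have hcov : (⟨i, by omega⟩ : Fin n) ⋖ ⟨i + 1, hi⟩ := by simp [Fin.covBy_iff]
    rw [← not_iff_not, ← hZ.2.1 _ _ hcov, ih (by omega), Nat.even_add_one, not_not]

theorem Fin.exists_isAlternating_iff_even (n : ℕ) :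
    (∃ Z : Fin n → Prop, IsAlternating Z) ↔ Even n := by
  constructor
  · rintro ⟨Z, hZ⟩
    cases n with
    | zero => exact Even.zero
    | succ m =>
      have hlast := hZ.2.2 (Fin.last m) (isMax_iff_eq_top.2 rfl)
      rwa [hZ.fin_iff_even, Fin.val_last, ← Nat.even_add_one] at hlast
  · intro hn
    refine ⟨fun i => Even (i : ℕ), fun a ha => ?_, fun a b hab => ?_, fun a ha => ?_⟩
    · cases n with
      | zero => exact a.elim0
      | succ m => simp [isMin_iff_eq_bot.1 ha, bot_eq_zero]
    · simp [← Nat.covBy_iff_add_one_eq.1 (Fin.covBy_iff.1 hab), Nat.even_add_one]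
    · cases n with
      | zero => exact a.elim0
      | succ m => simpa [isMax_iff_eq_top.1 ha, Fin.top_eq_last, Nat.even_add_one] using hn

theorem exists_isAlternating_iff_even (α : Type*) [LinearOrder α] [Finite α] :
    (∃ Z : α → Prop, IsAlternating Z) ↔ Even (Nat.card α) := by
  have := Fintype.ofFinite α
  let e := Fintype.orderIsoFinOfCardEq α Nat.card_eq_fintype_card.symm
  rw [← Fin.exists_isAlternating_iff_even]
  exact ⟨fun ⟨Z, hZ⟩ => ⟨Z ∘ e, e.isAlternating_comp_iff.2 hZ⟩,
    fun ⟨Z, hZ⟩ => ⟨Z ∘ e.symm, e.symm.isAlternating_comp_iff.2 hZ⟩⟩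

universe u v

def memLang : FirstOrder.Language :=
  ⟨fun _ => PEmpty, fun n => match n with
    | 2 => PUnit
    | _ => PEmpty⟩

namespace memLang

instance : IsRelational memLang := fun _ => inferInstanceAs (IsEmpty PEmpty)

instance : Subsingleton (Σ n, memLang.Relations n) where
  allEq := by
    rintro ⟨(_ | _ | _ | _), R⟩ ⟨(_ | _ | _ | _), S⟩ <;>
      first | rfl | exact PEmpty.elim R | exact PEmpty.elim S

instance : Finite (Σ n, memLang.Relations n) := Finite.of_subsingleton

def memRel : memLang.Relations 2 := PUnit.unit

end memLang

open memLang

-- The atoms of a `memLang`-structure are the elements `x` with `Mem x x`.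
def Mem {A : Type*} [memLang.Structure A] (x y : A) : Prop := Structure.RelMap memRel ![x, y]

section
variable (A : Type*) [memLang.Structure A]

def HasEmptySet : Prop := ∃ z : A, ∀ x, ¬ Mem x z

def HasAdjoin : Prop := ∀ y p : A, Mem p p → ∃ z, ∀ x, Mem x z ↔ Mem x y ∨ x = p

variable {A}

theorem exists_forall_mem_iff_mem_finset (hempty : HasEmptySet A) (hadjoin : HasAdjoin A)
    (S : Finset A) (hS : ∀ x ∈ S, Mem x x) : ∃ z, ∀ x, Mem x z ↔ x ∈ S := by
  classical
  induction S using Finset.induction_on with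
  | empty => simpa [HasEmptySet] using hempty
  | insert p S _ ih =>
    obtain ⟨z, hz⟩ := ih fun x hx => hS x (Finset.mem_insert_of_mem hx)
    obtain ⟨z', hz'⟩ := hadjoin z p (hS p (Finset.mem_insert_self p S))
    exact ⟨z', fun x => by rw [hz', hz, Finset.mem_insert, or_comm]⟩

theorem exists_forall_atom_mem_iff [Finite A] (hempty : HasEmptySet A) (hadjoin : HasAdjoin A)
    (Z : {x : A // Mem x x} → Prop) : ∃ z, ∀ p : {x : A // Mem x x}, Mem p.1 z ↔ Z p := by
  classical
  have := Fintype.ofFinite A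
  obtain ⟨z, hz⟩ := exists_forall_mem_iff_mem_finset hempty hadjoin
    {x | ∃ h : Mem x x, Z ⟨x, h⟩} (by simp +contextual)
  exact ⟨z, fun p => by simp [hz, p.2]⟩

end

def memVar {l : ℕ} (i j : Fin l) : (addOrder memLang).BoundedFormula Empty l :=
  Relations.boundedFormula₂ (L := addOrder memLang.{u, v}) (Sum.inl memRel.{u, v}) &i &j

def ltVar {l : ℕ} (i j : Fin l) : (addOrder memLang).BoundedFormula Empty l :=
  Relations.boundedFormula₂ (L := addOrder memLang.{u, v}) (Sum.inr ()) &i &j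

section
variable {A : Type*} (SA : memLang.Structure A) (r : A → A → Prop)

@[simp] theorem realize_memVar {l} (i j : Fin l) (v : Empty → A) (xs : Fin l → A) :
    @BoundedFormula.Realize _ A (addOrderStruct memLang A SA r) _ _ (memVar i j) v xs ↔
      Mem (xs i) (xs j) :=
  @BoundedFormula.realize_rel₂ _ _ (addOrderStruct memLang A SA r) _ _ _ _ _ _ _

@[simp] theorem realize_ltVar {l} (i j : Fin l) (v : Empty → A) (xs : Fin l → A) :
    @BoundedFormula.Realize _ A (addOrderStruct memLang A SA r) _ _ (ltVar i j) v xs ↔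
      r (xs i) (xs j) :=
  @BoundedFormula.realize_rel₂ _ _ (addOrderStruct memLang A SA r) _ _ _ _ _ _ _

def existsEmpty : (addOrder memLang.{u, v}).Sentence := ∃' ∀' ∼(memVar 1 0)

def adjoinAtom : (addOrder memLang.{u, v}).Sentence :=
  ∀' ∀' (memVar 1 1 ⟹ ∃' ∀' (memVar 3 2 ⇔ (memVar 3 0 ⊔ (&3 =' &1))))

theorem realize_existsEmpty :
    @Sentence.Realize _ A (addOrderStruct memLang A SA r) existsEmpty ↔ HasEmptySet A := by
  simp [existsEmpty, HasEmptySet, Sentence.Realize, Formula.Realize, Fin.snoc]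

theorem realize_adjoinAtom :
    @Sentence.Realize _ A (addOrderStruct memLang A SA r) adjoinAtom ↔ HasAdjoin A := by
  simp [adjoinAtom, HasAdjoin, Sentence.Realize, Formula.Realize, Fin.snoc]
end

def alternatingSet : (addOrder memLang.{u, v}).Sentence :=
  ∃' ((∀' ((memVar 1 1 ⊓ ∀' (memVar 2 2 ⟹ ∼(ltVar 2 1))) ⟹ memVar 1 0)) ⊓
    (∀' (memVar 1 1 ⟹
      ∀' ((memVar 2 2 ⊓ ltVar 1 2 ⊓ ∀' (memVar 3 3 ⟹ ∼(ltVar 1 3 ⊓ ltVar 3 2))) ⟹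
        (memVar 1 0 ⇔ ∼(memVar 2 0))))) ⊓
    ∀' ((memVar 1 1 ⊓ ∀' (memVar 2 2 ⟹ ∼(ltVar 1 2))) ⟹ ∼(memVar 1 0)))

theorem realize_alternatingSet {A : Type*} [LinearOrder A] (SA : memLang.Structure A) :
    @Sentence.Realize _ A (addOrderStruct memLang A SA (· < ·)) alternatingSet ↔
      ∃ z : A, IsAlternating fun p : {x : A // Mem x x} => Mem p.1 z := by
  simp [alternatingSet, Sentence.Realize, Formula.Realize, Fin.snoc, IsAlternating,
    isMin_iff_forall_not_lt, isMax_iff_forall_not_lt, CovBy, and_assoc]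

def evenAtoms : (addOrder memLang.{u, v}).Sentence := existsEmpty ⊓ adjoinAtom ⊓ alternatingSet

theorem realize_evenAtoms {A : Type*} [Finite A] (SA : memLang.Structure A) (r : A → A → Prop)
    [IsStrictTotalOrder A r] :
    @Sentence.Realize _ A (addOrderStruct memLang A SA r) evenAtoms ↔
      HasEmptySet A ∧ HasAdjoin A ∧ Even (Nat.card {x : A // Mem x x}) := by
  classical
  let := linearOrderOfSTO r
  simp only [evenAtoms, Sentence.realize_inf, realize_existsEmpty, realize_adjoinAtom, and_assoc,
    realize_alternatingSet SA, ← exists_isAlternating_iff_even]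
  refine and_congr_right fun hempty => and_congr_right fun hadjoin =>
    ⟨fun ⟨z, hz⟩ => ⟨_, hz⟩, fun ⟨Z, hZ⟩ => ?_⟩
  obtain ⟨z, hz⟩ := exists_forall_atom_mem_iff hempty hadjoin Z
  exact ⟨z, by simpa only [hz]⟩

section Venn
open Finset
variable {α β : Type*} [DecidableEq α] [DecidableEq β] {l : ℕ}

def vennIndex (S : Fin l → Finset α) (a : α) : Fin l → Bool := fun i => decide (a ∈ S i)

theorem vennIndex_snoc (S : Fin l → Finset α) (s : Finset α) (a : α) :
    vennIndex (Fin.snoc S s) a = Fin.snoc (vennIndex S a) (decide (a ∈ s)) := by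
  ext i
  induction i using Fin.lastCases <;> simp [vennIndex]

theorem exists_subset_min_card_eq {U : Finset β} {a₁ a₂ K : ℕ}
    (h : min (a₁ + a₂) (2 * K) = min #U (2 * K)) :
    ∃ t ⊆ U, min a₁ K = min #t K ∧ min a₂ K = min #(U \ t) K := by
  obtain ⟨b₁, hb₁, h₁, h₂⟩ :
      ∃ b₁ ≤ #U, min a₁ K = min b₁ K ∧ min a₂ K = min (#U - b₁) K := by
    -- Unless `a₁ + a₂ = #U`, both sides are at least `2 * K`: keep a part below `K` exact and
    -- let the other one absorb the rest.
    refine ⟨if a₁ + a₂ = #U ∨ a₁ < K then a₁ else if a₂ < K then #U - a₂ else K,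
      ?_, ?_, ?_⟩ <;> split_ifs <;> omega
  obtain ⟨t, htU, rfl⟩ := exists_subset_card_eq hb₁
  exact ⟨t, htU, h₁, by rwa [card_sdiff_of_subset htU]⟩

variable [Fintype α] [Fintype β]

def venn (S : Fin l → Finset α) (b : Fin l → Bool) : Finset α := {a | vennIndex S a = b}

@[simp] theorem mem_venn {S : Fin l → Finset α} {b : Fin l → Bool} {a : α} :
    a ∈ venn S b ↔ vennIndex S a = b := by
  simp [venn]

def VennEquiv (K : ℕ) (S : Fin l → Finset α) (T : Fin l → Finset β) : Prop :=
  ∀ b, min #(venn S b) K = min #(venn T b) K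

variable {K : ℕ} {S : Fin l → Finset α} {T : Fin l → Finset β}

theorem VennEquiv.symm (h : VennEquiv K S T) : VennEquiv K T S := fun b => (h b).symm

theorem VennEquiv.mono {K' : ℕ} (hK : K ≤ K') (h : VennEquiv K' S T) : VennEquiv K S T := by
  intro b
  have := h b
  omega

theorem VennEquiv.venn_eq_empty_iff (hK : 0 < K) (h : VennEquiv K S T) (b : Fin l → Bool) :
    venn S b = ∅ ↔ venn T b = ∅ := by
  have := h b
  rw [← card_eq_zero, ← card_eq_zero]
  omega

theorem subset_iff_forall_venn_eq_empty (i j : Fin l) :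
    S i ⊆ S j ↔ ∀ b : Fin l → Bool, b i = true → b j = false → venn S b = ∅ := by
  constructor
  · intro hsub b hbi hbj
    refine eq_empty_of_forall_notMem fun a ha => ?_
    rw [mem_venn] at ha
    subst ha
    simp_all [vennIndex, hsub _]
  · intro h a hai
    by_contra haj
    have := h (vennIndex S a) (by simpa [vennIndex]) (by simpa [vennIndex])
    simp only [eq_empty_iff_forall_notMem, mem_venn] at this
    exact this a rfl

theorem VennEquiv.subset_iff (hK : 0 < K) (h : VennEquiv K S T) (i j : Fin l) :
    S i ⊆ S j ↔ T i ⊆ T j := by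
  simp only [subset_iff_forall_venn_eq_empty, h.venn_eq_empty_iff hK]

@[simp] theorem venn_snoc_true (S : Fin l → Finset α) (s : Finset α) (b : Fin l → Bool) :
    venn (Fin.snoc S s) (Fin.snoc b true) = venn S b ∩ s := by
  ext a
  simp [vennIndex_snoc]

@[simp] theorem venn_snoc_false (S : Fin l → Finset α) (s : Finset α) (b : Fin l → Bool) :
    venn (Fin.snoc S s) (Fin.snoc b false) = venn S b \ s := by
  ext a
  simp [vennIndex_snoc]

theorem vennEquiv_snoc_iff {s : Finset α} {t : Finset β} :
    VennEquiv K (Fin.snoc S s) (Fin.snoc T t) ↔ ∀ b,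
      min #(venn S b ∩ s) K = min #(venn T b ∩ t) K ∧
      min #(venn S b \ s) K = min #(venn T b \ t) K := by
  constructor
  · intro h b
    exact ⟨by simpa using h (Fin.snoc b true), by simpa using h (Fin.snoc b false)⟩
  · intro h c
    induction c using Fin.snocCases with
    | snoc b e => cases e <;> simp [h b]

theorem venn_inter_biUnion {t : (Fin l → Bool) → Finset β} (ht : ∀ b, t b ⊆ venn T b)
    (b : Fin l → Bool) : venn T b ∩ univ.biUnion t = t b := by
  ext a
  simp only [mem_inter, mem_biUnion, mem_univ, true_and]
  constructor
  · rintro ⟨ha, b', hab'⟩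
    rwa [← (mem_venn.1 ha).symm.trans (mem_venn.1 (ht b' hab'))] at hab'
  · exact fun ha => ⟨ht b ha, b, ha⟩

theorem VennEquiv.exists_snoc (h : VennEquiv (2 * K) S T) (s : Finset α) :
    ∃ t, VennEquiv K (Fin.snoc S s) (Fin.snoc T t) := by
  have hsplit (b : Fin l → Bool) : ∃ t ⊆ venn T b, min #(venn S b ∩ s) K = min #t K ∧
      min #(venn S b \ s) K = min #(venn T b \ t) K :=
    exists_subset_min_card_eq (by rw [card_inter_add_card_sdiff]; exact h b)
  choose t htT ht using hsplit
  refine ⟨univ.biUnion t, vennEquiv_snoc_iff.2 fun b => ?_⟩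
  have hsdiff : venn T b \ univ.biUnion t = venn T b \ t b := by
    rw [← sdiff_inter_self_left, venn_inter_biUnion htT]
  rw [venn_inter_biUnion htT, hsdiff]
  exact ht b

theorem VennEquiv.exists_snoc_singleton (hK : 0 < K) (h : VennEquiv (2 * K) S T) (p : α) :
    ∃ p', VennEquiv K (Fin.snoc S {p}) (Fin.snoc T {p'}) := by
  obtain ⟨p', hp'⟩ : (venn T (vennIndex S p)).Nonempty := by
    rw [nonempty_iff_ne_empty, Ne, ← h.venn_eq_empty_iff (by omega)]
    exact ne_empty_of_mem (mem_venn.2 rfl)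
  refine ⟨p', vennEquiv_snoc_iff.2 fun b => ?_⟩
  have hpp' : p ∈ venn S b ↔ p' ∈ venn T b := by simp [mem_venn.1 hp']
  have hb := h b
  by_cases hp : p ∈ venn S b
  · have hp'' := hpp'.1 hp
    have := card_pos.2 ⟨p, hp⟩
    have := card_pos.2 ⟨p', hp''⟩
    simp only [inter_singleton_of_mem hp, inter_singleton_of_mem hp'', sdiff_singleton_eq_erase,
      card_erase_of_mem hp, card_erase_of_mem hp'', card_singleton, true_and]
    omega
  · have hp'' : p' ∉ venn T b := hpp'.not.1 hp
    simp only [inter_singleton_of_notMem hp, inter_singleton_of_notMem hp'',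
      sdiff_singleton_eq_erase, erase_eq_of_notMem hp, erase_eq_of_notMem hp'', Finset.card_empty,
      true_and]
    omega

theorem vennEquiv_of_fin_zero (S : Fin 0 → Finset α) (T : Fin 0 → Finset β)
    (hα : K ≤ Fintype.card α) (hβ : K ≤ Fintype.card β) : VennEquiv K S T := by
  intro b
  have hS : venn S b = univ := eq_univ_of_forall fun a => mem_venn.2 (Subsingleton.elim _ _)
  have hT : venn T b = univ := eq_univ_of_forall fun a => mem_venn.2 (Subsingleton.elim _ _)
  rw [hS, hT, card_univ, card_univ]
  omega

end Venn

abbrev SetModel (α : Type*) := α ⊕ Finset α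

namespace SetModel
variable {α : Type*}

def pts : SetModel α → Finset α := Sum.elim singleton id

instance : memLang.{u, v}.Structure (SetModel α) where
  funMap := fun f => PEmpty.elim f
  RelMap := fun {n} R xs => match n, R with
    | 2, _ => (xs 0).isLeft ∧ pts (xs 0) ⊆ pts (xs 1)

theorem mem_iff {x y : SetModel α} : Mem x y ↔ x.isLeft ∧ pts x ⊆ pts y := Iff.rfl

theorem mem_self_iff {x : SetModel α} : Mem x x ↔ x.isLeft := by
  simp [mem_iff]

theorem eq_iff {x y : SetModel α} : x = y ↔ x.isLeft = y.isLeft ∧ pts x = pts y := by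
  cases x <;> cases y <;> simp [pts]

theorem hasEmptySet : HasEmptySet (SetModel α) :=
  ⟨.inr ∅, fun x => by cases x <;> simp [mem_iff, pts]⟩

theorem hasAdjoin [DecidableEq α] : HasAdjoin (SetModel α) := by
  rintro y (p | s) hp
  · refine ⟨.inr (insert p (pts y)), fun x => ?_⟩
    cases x <;> simp [mem_iff, pts, or_comm]
  · simp [mem_self_iff] at hp

theorem card_atoms : Nat.card {x : SetModel α // Mem x x} = Nat.card α :=
  Nat.card_congr ((Equiv.subtypeEquivRight fun _ => mem_self_iff).trans Equiv.sumIsLeft)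

end SetModel

theorem FirstOrder.Language.Term.exists_eq_var_inr {L : FirstOrder.Language} [L.IsRelational]
    {β : Type*} (t : L.Term (Empty ⊕ β)) : ∃ b, t = var (Sum.inr b) := by
  rcases t with ((e | b) | ⟨f, _⟩)
  · exact e.elim
  · exact ⟨b, rfl⟩
  · exact isEmptyElim f

section EF
open SetModel
variable {α β : Type*} [Fintype α] [DecidableEq α] [Fintype β] [DecidableEq β] {l : ℕ}

def TupleEquiv (k : ℕ) (xs : Fin l → SetModel α) (ys : Fin l → SetModel β) : Prop :=
  (∀ i, (xs i).isLeft = (ys i).isLeft) ∧ VennEquiv (2 ^ k) (pts ∘ xs) (pts ∘ ys)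

variable {k : ℕ} {xs : Fin l → SetModel α} {ys : Fin l → SetModel β}

theorem TupleEquiv.symm (h : TupleEquiv k xs ys) : TupleEquiv k ys xs :=
  ⟨fun i => (h.1 i).symm, h.2.symm⟩

theorem TupleEquiv.mono {j : ℕ} (hjk : j ≤ k) (h : TupleEquiv k xs ys) : TupleEquiv j xs ys :=
  ⟨h.1, h.2.mono (Nat.pow_le_pow_right two_pos hjk)⟩

theorem TupleEquiv.subset_iff (h : TupleEquiv k xs ys) (i j : Fin l) :
    pts (xs i) ⊆ pts (xs j) ↔ pts (ys i) ⊆ pts (ys j) :=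
  h.2.subset_iff (Nat.two_pow_pos k) i j

theorem TupleEquiv.mem_iff (h : TupleEquiv k xs ys) (i j : Fin l) :
    Mem.{_, u, v} (xs i) (xs j) ↔ Mem.{_, u, v} (ys i) (ys j) := by
  rw [SetModel.mem_iff, SetModel.mem_iff, h.1 i, h.subset_iff]

theorem TupleEquiv.eq_iff (h : TupleEquiv k xs ys) (i j : Fin l) : xs i = xs j ↔ ys i = ys j := by
  simp only [SetModel.eq_iff, h.1 i, h.1 j, Finset.Subset.antisymm_iff, h.subset_iff]

theorem TupleEquiv.exists_snoc (h : TupleEquiv (k + 1) xs ys) (z : SetModel α) :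
    ∃ z', TupleEquiv k (Fin.snoc xs z) (Fin.snoc ys z') := by
  have hV : VennEquiv (2 * 2 ^ k) (pts ∘ xs) (pts ∘ ys) := by rw [← pow_succ']; exact h.2
  have hleft (z' : SetModel β) (hz : z.isLeft = z'.isLeft) (i : Fin (l + 1)) :
      (Fin.snoc (α := fun _ => SetModel α) xs z i).isLeft =
        (Fin.snoc (α := fun _ => SetModel β) ys z' i).isLeft := by
    induction i using Fin.lastCases <;> simp [hz, h.1]
  cases z with
  | inl p =>
    obtain ⟨p', hp'⟩ := hV.exists_snoc_singleton (Nat.two_pow_pos k) p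
    exact ⟨.inl p', hleft _ rfl, by simpa [Fin.comp_snoc, pts] using hp'⟩
  | inr s =>
    obtain ⟨t, ht⟩ := hV.exists_snoc s
    exact ⟨.inr t, hleft _ rfl, by simpa [Fin.comp_snoc, pts] using ht⟩

theorem tupleEquiv_of_fin_zero (hα : 2 ^ k ≤ Fintype.card α) (hβ : 2 ^ k ≤ Fintype.card β)
    (xs : Fin 0 → SetModel α) (ys : Fin 0 → SetModel β) : TupleEquiv k xs ys :=
  ⟨fun i => i.elim0, vennEquiv_of_fin_zero _ _ hα hβ⟩

end EF

theorem exists_tupleEquiv_realize_iff {l : ℕ} (φ : memLang.{u, v}.BoundedFormula Empty l) :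
    ∃ k, ∀ {α β : Type*} [Fintype α] [DecidableEq α] [Fintype β] [DecidableEq β]
      (xs : Fin l → SetModel α) (ys : Fin l → SetModel β), TupleEquiv k xs ys →
      ∀ v w, (φ.Realize v xs ↔ φ.Realize w ys) := by
  induction φ with
  | falsum => exact ⟨0, fun _ _ _ _ _ => Iff.rfl⟩
  | equal t₁ t₂ =>
    obtain ⟨i, rfl⟩ := t₁.exists_eq_var_inr
    obtain ⟨j, rfl⟩ := t₂.exists_eq_var_inr
    exact ⟨0, fun _ _ h _ _ => h.eq_iff i j⟩
  | @rel _ n R ts =>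
    match n, R, ts with
    | 0, R, _ | 1, R, _ | _ + 3, R, _ => exact PEmpty.elim R
    | 2, _, ts =>
      obtain ⟨i, hi⟩ := (ts 0).exists_eq_var_inr
      obtain ⟨j, hj⟩ := (ts 1).exists_eq_var_inr
      refine ⟨0, fun xs ys h v w => ?_⟩
      show Mem.{_, u, v} ((ts 0).realize (Sum.elim v xs)) ((ts 1).realize (Sum.elim v xs)) ↔
        Mem.{_, u, v} ((ts 0).realize (Sum.elim w ys)) ((ts 1).realize (Sum.elim w ys))
      rw [hi, hj]
      exact h.mem_iff i j
  | imp φ ψ ihφ ihψ =>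
    obtain ⟨k₁, h₁⟩ := ihφ
    obtain ⟨k₂, h₂⟩ := ihψ
    exact ⟨max k₁ k₂, fun xs ys h v w => imp_congr (h₁ xs ys (h.mono (le_max_left _ _)) v w)
      (h₂ xs ys (h.mono (le_max_right _ _)) v w)⟩
  | all φ ih =>
    obtain ⟨k, hk⟩ := ih
    refine ⟨k + 1, fun xs ys h v w => ⟨fun H z' => ?_, fun H z => ?_⟩⟩
    · obtain ⟨z, hz⟩ := h.symm.exists_snoc z'
      exact (hk _ _ hz.symm v w).1 (H z)
    · obtain ⟨z', hz⟩ := h.exists_snoc z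
      exact (hk _ _ hz v w).2 (H z')

theorem SetModel.exists_realize_iff (ψ : memLang.{u, v}.Sentence) :
    ∃ k, ∀ {α β : Type*} [Fintype α] [DecidableEq α] [Fintype β] [DecidableEq β],
      2 ^ k ≤ Fintype.card α → 2 ^ k ≤ Fintype.card β →
        (SetModel α ⊨ ψ ↔ SetModel β ⊨ ψ) := by
  obtain ⟨k, hk⟩ := exists_tupleEquiv_realize_iff ψ
  exact ⟨k, fun hα hβ => hk _ _ (tupleEquiv_of_fin_zero hα hβ _ _) _ _⟩

theorem SetModel.realize_evenAtoms {α : Type*} [Fintype α] [DecidableEq α]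
    (r : SetModel α → SetModel α → Prop) [IsStrictTotalOrder (SetModel α) r] :
    @Sentence.Realize _ (SetModel α) (addOrderStruct memLang _ inferInstance r) evenAtoms ↔
      Even (Fintype.card α) := by
  rw [_root_.realize_evenAtoms, card_atoms, Nat.card_eq_fintype_card]
  exact ⟨fun h => h.2.2, fun h => ⟨hasEmptySet, hasAdjoin, h⟩⟩

/-- Order-invariant first-order logic is strictly more expressive than first-order logic
on finite structures: there are a finite relational signature `σ` and a sentence `φ` over
`σ ∪ {<}` that is order-invariant on finite `σ`-structures, such that no first-order
`σ`-sentence defines the same class of finite `σ`-structures. -/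
theorem stmt14 :
    ∃ (σ : FirstOrder.Language) (_ : σ.IsRelational) (_ : Finite (Σ n, σ.Relations n))
      (φ : (addOrder σ).Sentence),
      -- φ is order-invariant on finite σ-structures:
      (∀ (A : Type) (_ : Fintype A) (SA : σ.Structure A) (r₁ r₂ : A → A → Prop),
        IsStrictTotalOrder A r₁ → IsStrictTotalOrder A r₂ →
        (@Sentence.Realize (addOrder σ) A (addOrderStruct σ A SA r₁) φ ↔
          @Sentence.Realize (addOrder σ) A (addOrderStruct σ A SA r₂) φ)) ∧
      -- but no first-order σ-sentence defines the same class of finite σ-structures: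
      ¬ ∃ ψ : σ.Sentence,
          ∀ (A : Type) (_ : Fintype A) (SA : σ.Structure A) (r : A → A → Prop),
            IsStrictTotalOrder A r →
            (@Sentence.Realize (addOrder σ) A (addOrderStruct σ A SA r) φ ↔
              @Sentence.Realize σ A SA ψ) := by
  refine ⟨memLang, inferInstance, inferInstance, evenAtoms, fun A _ SA r₁ r₂ _ _ => ?_, ?_⟩
  · rw [realize_evenAtoms SA r₁, realize_evenAtoms SA r₂]
  · rintro ⟨ψ, hψ⟩
    have hfin (n : ℕ) : SetModel (Fin n) ⊨ ψ ↔ Even n := by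
      rw [← hψ _ inferInstance _ WellOrderingRel inferInstance, SetModel.realize_evenAtoms,
        Fintype.card_fin]
    obtain ⟨k, hk⟩ := SetModel.exists_realize_iff ψ
    have hiff := hk (α := Fin (2 * 2 ^ k)) (β := Fin (2 * 2 ^ k + 1))
      (by rw [Fintype.card_fin]; omega) (by rw [Fintype.card_fin]; omega)
    rw [hfin, hfin] at hiff
    exact Nat.not_even_two_mul_add_one _ (hiff.1 (even_two_mul _))
end
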